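/- There exists a constant C > 0 such that for all n ≥ 2, λ₁^{(2)}(Cay(G_n, S)) ≤ C · (log n) / n², where G_n = ℤ₂ ≀ ℤ_n is the lamplighter group with generating set S. -/

import Mathlib

noncomputable section

/-- The underlying set of the lamplighter group `ℤ₂ ≀ ℤ_n`. -/
abbrev Lamplighter (n : ℕ) := (ZMod n → ZMod 2) × ZMod n

/-- Multiplication in the lamplighter group `ℤ₂ ≀ ℤ_n = (⊕ ℤ₂) ⋊ ℤ_n`, where `k ∈ ℤ_n`
acts on configurations by `(k·f)(i) = f(i − k)`. -/
def llMul (n : ℕ) (x y : Lamplighter n) : Lamplighter n :=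
  (fun i => x.1 i + y.1 (i - x.2), x.2 + y.2)

/-- Inversion in the lamplighter group `ℤ₂ ≀ ℤ_n`. -/
def llInv (n : ℕ) (x : Lamplighter n) : Lamplighter n :=
  (fun i => -x.1 (i + x.2), -x.2)

/-- The generator `(δ₀, 0)`: the lamp at position `0` is lit, no shift. -/
def llGenA (n : ℕ) : Lamplighter n :=
  (fun i => if i = 0 then 1 else 0, 0)

/-- The generator `(0, 1)`: no lamps lit, shift by `1`. -/
def llGenB (n : ℕ) : Lamplighter n := (fun _ => 0, 1)

/-- The symmetrized generating set `S ∪ S⁻¹` of the lamplighter group. -/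
def llGens (n : ℕ) : List (Lamplighter n) :=
  [llGenA n, llGenB n, llInv n (llGenA n), llInv n (llGenB n)]

/-- The Cayley graph of the lamplighter group `ℤ₂ ≀ ℤ_n` with respect to
`S = {(δ₀,0), (0,1)}`: distinct `x, y` are adjacent iff `y = s·x` for some `s ∈ S ∪ S⁻¹`
(the relation is symmetrized, which changes nothing as `S ∪ S⁻¹` is closed under inverses). -/
def llGraph (n : ℕ) : SimpleGraph (Lamplighter n) where
  Adj x y := x ≠ y ∧ ∃ s ∈ llGens n, y = llMul n s x ∨ x = llMul n s y
  symm := ⟨by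
    rintro x y ⟨h1, s, hs, h2⟩
    exact ⟨h1.symm, s, hs, h2.symm⟩⟩
  loopless := ⟨fun x h => h.1 rfl⟩

/-- The first positive eigenvalue `λ₁^{(p)}` of the discrete `p`-Laplacian of the finite graph
with edge multiplicities `ω`, defined via the variational characterization (3). -/
def lambdaOne {V : Type*} [Fintype V] (ω : V → V → ℕ) (p : ℝ) : ℝ :=
  sInf {r : ℝ | ∃ f : V → ℝ, (¬ ∀ x y : V, f x = f y) ∧
    r = (∑ x : V, ∑ y : V, |f x - f y| ^ p * (ω x y : ℝ)) /
        (⨅ α : ℝ, ∑ x : V, |f x - α| ^ p)}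

/-- Edge multiplicities of the Cayley graph of the lamplighter group:
`ω(x,y) = #{s ∈ S ∪ S⁻¹ : y = s·x}`. -/
def llOmega (n : ℕ) (x y : Lamplighter n) : ℕ :=
  haveI : DecidablePred (fun s : Lamplighter n => y = llMul n s x) :=
    fun _ => Classical.dec _
  ((llGens n).filter (fun s => y = llMul n s x)).length


/-!
Take as test function the distance of the lamplighter's position from `0` in the `n`-cycle.
Toggling a lamp does not change it and a shift changes it by at most `1`, so its energy is at
most `2 |G_n|`. Its variance is of order `n³ |G_n| / n`: translating the cycle by `n / 2` moves
each of the `n / 8` points nearest to `0` at least `n / 8` further away. Hence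
`λ₁ ≤ 4096 / n² ≤ (4096 / log 2) · log n / n²`.
-/
lemma lambdaOne_le_of_bounds {V : Type*} [Fintype V] (ω : V → V → ℕ) (p : ℝ) (f : V → ℝ)
    (hf : ¬ ∀ x y : V, f x = f y) {E D : ℝ}
    (hE : ∑ x : V, ∑ y : V, |f x - f y| ^ p * (ω x y : ℝ) ≤ E) (hD : 0 < D)
    (hDle : ∀ α : ℝ, D ≤ ∑ x : V, |f x - α| ^ p) :
    lambdaOne ω p ≤ E / D := by
  have hbdd : BddBelow {r : ℝ | ∃ f : V → ℝ, (¬ ∀ x y : V, f x = f y) ∧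
      r = (∑ x : V, ∑ y : V, |f x - f y| ^ p * (ω x y : ℝ)) /
        (⨅ α : ℝ, ∑ x : V, |f x - α| ^ p)} := by
    refine ⟨0, ?_⟩
    rintro r ⟨g, -, rfl⟩
    refine div_nonneg (by positivity) (le_ciInf fun β => by positivity)
  calc lambdaOne ω p
      ≤ (∑ x : V, ∑ y : V, |f x - f y| ^ p * (ω x y : ℝ)) / ⨅ α : ℝ, ∑ x : V, |f x - α| ^ p :=
        csInf_le hbdd ⟨f, hf, rfl⟩
    _ ≤ E / D := div_le_div₀ ((by positivity : (0:ℝ) ≤ _).trans hE) hE hD (le_ciInf hDle)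

lemma sum_mul_length_filter_eq {V : Type*} [Fintype V] (h : V → ℝ) (t : V → V) (L : List V)
    [dec : ∀ y : V, DecidablePred (fun s : V => y = t s)] :
    ∑ y : V, h y * ((L.filter (fun s => y = t s)).length : ℝ) = (L.map (fun s => h (t s))).sum := by
  induction L with
  | nil => simp
  | cons a L ih =>
    have hsplit : ∀ y : V, h y * (((a :: L).filter (fun s => y = t s)).length : ℝ)
        = (if y = t a then h y else 0) + h y * ((L.filter (fun s => y = t s)).length : ℝ) := by
      intro y
      by_cases hy : y = t a
      · simp [hy]; ring
      · simp [hy]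
    rw [Finset.sum_congr rfl fun y _ => hsplit y, Finset.sum_add_distrib, ih,
      Finset.sum_eq_single (t a) (fun y _ hy => if_neg hy) (by simp), if_pos rfl]
    simp

lemma llOmega_energy_of_position (n : ℕ) [NeZero n] (F : ZMod n → ℝ) (p : ℝ) (hp : p ≠ 0) :
    ∑ x : Lamplighter n, ∑ y : Lamplighter n, |F x.2 - F y.2| ^ p * (llOmega n x y : ℝ)
      = ∑ x : Lamplighter n, (|F x.2 - F (1 + x.2)| ^ p + |F x.2 - F (-1 + x.2)| ^ p) := by
  refine Finset.sum_congr rfl fun x _ => ?_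
  simp only [llOmega]
  rw [sum_mul_length_filter_eq (fun y => |F x.2 - F y.2| ^ p) (fun s => llMul n s x)
    (dec := fun _ _ => Classical.dec _)]
  simp [llGens, llMul, llInv, llGenA, llGenB, Real.zero_rpow hp]

lemma sum_sq_sub_translate_le {G : Type*} [AddGroup G] [Fintype G] (g : G → ℝ) (m : G) (α : ℝ) :
    ∑ k : G, (g (k + m) - g k) ^ 2 ≤ 4 * ∑ k : G, (g k - α) ^ 2 := by
  have hshift : ∑ k : G, (g (k + m) - α) ^ 2 = ∑ k : G, (g k - α) ^ 2 :=
    Equiv.sum_comp (Equiv.addRight m) fun k => (g k - α) ^ 2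
  calc ∑ k : G, (g (k + m) - g k) ^ 2
      ≤ ∑ k : G, 2 * ((g (k + m) - α) ^ 2 + (g k - α) ^ 2) :=
        Finset.sum_le_sum fun k _ => by nlinarith [sq_nonneg (g (k + m) + g k - 2 * α)]
    _ = 4 * ∑ k : G, (g k - α) ^ 2 := by
        rw [← Finset.mul_sum, Finset.sum_add_distrib, hshift]; ring

def cycleDist (n : ℕ) (k : ZMod n) : ℕ := min k.val (n - k.val)

lemma abs_cycleDist_one_add_sub_le (n : ℕ) [NeZero n] (k : ZMod n) :
    |(cycleDist n (1 + k) : ℝ) - cycleDist n k| ≤ 1 := by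
  have hk : k.val < n := k.val_lt
  have hval : (1 + k).val = if k.val + 1 = n then 0 else k.val + 1 := by
    rw [show 1 + k = ((k.val + 1 : ℕ) : ZMod n) by push_cast; rw [ZMod.natCast_zmod_val]; ring,
      ZMod.val_natCast]
    split_ifs with h
    · rw [h, Nat.mod_self]
    · exact Nat.mod_eq_of_lt (by omega)
  have hle : cycleDist n (1 + k) ≤ cycleDist n k + 1 ∧ cycleDist n k ≤ cycleDist n (1 + k) + 1 := by
    unfold cycleDist
    split_ifs at hval <;> omega
  have h1 : (cycleDist n (1 + k) : ℝ) ≤ cycleDist n k + 1 := by exact_mod_cast hle.1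
  have h2 : (cycleDist n k : ℝ) ≤ cycleDist n (1 + k) + 1 := by exact_mod_cast hle.2
  rw [abs_sub_le_iff]
  constructor <;> linarith

lemma sum_sq_cycleDist_translate_ge (n : ℕ) [NeZero n] (hn : 2 ≤ n) :
    (n : ℝ) ^ 3 / 512
      ≤ ∑ k : ZMod n, ((cycleDist n (k + (n / 2 : ℕ)) : ℝ) - cycleDist n k) ^ 2 := by
  set q := n / 8 + 1
  have hval : ∀ j ∈ Finset.range q,
      (j : ZMod n).val = j ∧ ((j + n / 2 : ℕ) : ZMod n).val = j + n / 2 := fun j hj => by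
    have := Finset.mem_range.1 hj
    exact ⟨ZMod.val_natCast_of_lt (by omega), ZMod.val_natCast_of_lt (by omega)⟩
  have hinj : Set.InjOn (fun j : ℕ => (j : ZMod n)) (Finset.range q) := fun a ha b hb hab => by
    rw [← (hval a ha).1, ← (hval b hb).1]; exact congrArg ZMod.val hab
  have hgap : ∀ j ∈ Finset.range q,
      ((n : ℝ) / 8) ^ 2 ≤ ((cycleDist n ((j : ZMod n) + (n / 2 : ℕ)) : ℝ) - cycleDist n j) ^ 2 := by
    intro j hj
    have hjq := Finset.mem_range.1 hj
    have hnat : 8 * cycleDist n j + n ≤ 8 * cycleDist n ((j : ZMod n) + (n / 2 : ℕ)) := by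
      rw [← Nat.cast_add]; unfold cycleDist; rw [(hval j hj).1, (hval j hj).2]; omega
    have hreal : (8 * cycleDist n j + n : ℝ) ≤ 8 * cycleDist n ((j : ZMod n) + (n / 2 : ℕ)) := by
      exact_mod_cast hnat
    exact pow_le_pow_left₀ (by positivity) (by linarith) 2
  have hq : (n : ℝ) / 8 ≤ q := by
    rw [div_le_iff₀ (by norm_num)]; exact_mod_cast (by omega : n ≤ q * 8)
  calc (n : ℝ) ^ 3 / 512 = (n : ℝ) / 8 * ((n : ℝ) / 8) ^ 2 := by ring
    _ ≤ q * ((n : ℝ) / 8) ^ 2 := by gcongr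
    _ = ∑ _j ∈ Finset.range q, ((n : ℝ) / 8) ^ 2 := by simp
    _ ≤ ∑ j ∈ Finset.range q,
          ((cycleDist n ((j : ZMod n) + (n / 2 : ℕ)) : ℝ) - cycleDist n j) ^ 2 :=
        Finset.sum_le_sum hgap
    _ = ∑ k ∈ (Finset.range q).image (fun j : ℕ => (j : ZMod n)),
          ((cycleDist n (k + (n / 2 : ℕ)) : ℝ) - cycleDist n k) ^ 2 := by rw [Finset.sum_image hinj]
    _ ≤ _ := Finset.sum_le_univ_sum_of_nonneg fun _ => sq_nonneg _

section Lamplighter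

variable (n : ℕ) [NeZero n]

lemma llOmega_energy_cycleDist_le :
    ∑ x : Lamplighter n, ∑ y : Lamplighter n,
        |(cycleDist n x.2 : ℝ) - cycleDist n y.2| ^ (2 : ℝ) * (llOmega n x y : ℝ)
      ≤ 2 * Fintype.card (Lamplighter n) := by
  rw [llOmega_energy_of_position n (fun k => (cycleDist n k : ℝ)) 2 two_ne_zero]
  have hstep : ∀ k : ZMod n, |(cycleDist n k : ℝ) - cycleDist n (1 + k)| ^ (2 : ℝ) ≤ 1 := by
    intro k
    rw [Real.rpow_two, abs_sub_comm]
    exact pow_le_one₀ (abs_nonneg _) (abs_cycleDist_one_add_sub_le n k)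
  have hstep' : ∀ k : ZMod n, |(cycleDist n k : ℝ) - cycleDist n (-1 + k)| ^ (2 : ℝ) ≤ 1 := by
    intro k
    have h := hstep (-1 + k)
    rwa [add_neg_cancel_left, abs_sub_comm] at h
  calc _ ≤ ∑ _x : Lamplighter n, (2 : ℝ) :=
        Finset.sum_le_sum fun x _ => by linarith [hstep x.2, hstep' x.2]
    _ = 2 * Fintype.card (Lamplighter n) := by simp [mul_comm]

lemma card_mul_le_sum_sq_cycleDist_sub (hn : 2 ≤ n) (α : ℝ) :
    Fintype.card (ZMod n → ZMod 2) * ((n : ℝ) ^ 3 / 2048)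
      ≤ ∑ x : Lamplighter n, |(cycleDist n x.2 : ℝ) - α| ^ (2 : ℝ) := by
  have hcycle : (n : ℝ) ^ 3 / 2048 ≤ ∑ k : ZMod n, ((cycleDist n k : ℝ) - α) ^ 2 := by
    linarith [sum_sq_cycleDist_translate_ge n hn,
      sum_sq_sub_translate_le (fun k => (cycleDist n k : ℝ)) ((n / 2 : ℕ) : ZMod n) α]
  simp only [Real.rpow_two, sq_abs, Fintype.sum_prod_type, Finset.sum_const, Finset.card_univ,
    nsmul_eq_mul]
  gcongr

lemma lambdaOne_llOmega_le (hn : 2 ≤ n) : lambdaOne (llOmega n) 2 ≤ 4096 / (n : ℝ) ^ 2 := by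
  have hnonconst : ¬ ∀ x y : Lamplighter n, (cycleDist n x.2 : ℝ) = cycleDist n y.2 := by
    intro h
    have h01 : cycleDist n 0 = cycleDist n 1 := by exact_mod_cast h (0, 0) (0, 1)
    simp only [cycleDist, ZMod.val_zero, ZMod.val_one'' (show n ≠ 1 by omega)] at h01
    omega
  calc lambdaOne (llOmega n) 2
      ≤ 2 * Fintype.card (Lamplighter n)
          / (Fintype.card (ZMod n → ZMod 2) * ((n : ℝ) ^ 3 / 2048)) :=
        lambdaOne_le_of_bounds _ _ _ hnonconst (llOmega_energy_cycleDist_le n) (by positivity)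
          (card_mul_le_sum_sq_cycleDist_sub n hn)
    _ = 4096 / (n : ℝ) ^ 2 := by
        rw [Fintype.card_prod, ZMod.card, Nat.cast_mul]
        field_simp
        ring

end Lamplighter

/-- Proposition 8: there is `C > 0` with
`λ₁^{(2)}(Cay(ℤ₂ ≀ ℤ_n, S)) ≤ C·(log n)/n²` for all `n ≥ 2`. -/
theorem statement_10 :
    ∃ C : ℝ, 0 < C ∧ ∀ (n : ℕ) [NeZero n], 2 ≤ n →
      lambdaOne (llOmega n) 2 ≤ C * Real.log n / (n : ℝ) ^ 2 := by
  have hlog2 : 0 < Real.log 2 := Real.log_pos one_lt_two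
  refine ⟨4096 / Real.log 2, by positivity, fun n _ hn => ?_⟩
  have hlog : Real.log 2 ≤ Real.log n := Real.log_le_log two_pos (by exact_mod_cast hn)
  calc lambdaOne (llOmega n) 2 ≤ 4096 / (n : ℝ) ^ 2 := lambdaOne_llOmega_le n hn
    _ = 4096 / Real.log 2 * Real.log 2 / (n : ℝ) ^ 2 := by field_simp
    _ ≤ 4096 / Real.log 2 * Real.log n / (n : ℝ) ^ 2 := by gcongr
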